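/- arXiv:2411.05599 — 3 statements merged into one kernel-verified Lean document; each statement's English description precedes it below -/
import Mathlib

section
/- In the pedestrian crossing psychological game, if μ = 5, then in every psychological Nash equilibrium the pedestrian crosses with probability 0. -/
/-- Expected utility of the vehicle: `bw` is the belief probability the pedestrian
waits, `x` the probability the vehicle reduces, `y` the probability the pedestrian
waits. -/
noncomputable def Ev (bw x y : ℝ) : ℝ :=
  x * (y * (1 - bw) + (1 - y) * (1 + (1 - bw))) +
  (1 - x) * (y * (1 + bw) + (1 - y) * (1 - (1 - bw)))

/-- Expected utility of the pedestrian: `br`, `bw` are the belief probabilities that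
the vehicle reduces and that the pedestrian waits, `x` the probability the vehicle
reduces, `y` the probability the pedestrian waits. -/
noncomputable def Ep (mu br bw x y : ℝ) : ℝ :=
  y * (x * (1 - br) + (1 - x) * (1 + (1 - br))) +
  (1 - y) * (x * (1 + br - mu * (1 - bw)) +
             (1 - x) * (1 - (1 - br) - mu * (1 - bw)))

/-- Psychological Nash equilibrium of the pedestrian crossing game at `(x, y)`:
beliefs match the actual probabilities and neither player can improve by a
unilateral deviation. -/
def pedPE (mu x y : ℝ) : Prop :=
  x ∈ Set.Icc (0:ℝ) 1 ∧ y ∈ Set.Icc (0:ℝ) 1 ∧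
  (∀ x' ∈ Set.Icc (0:ℝ) 1, Ev y x' y ≤ Ev y x y) ∧
  (∀ y' ∈ Set.Icc (0:ℝ) 1, Ep mu x y x y' ≤ Ep mu x y x y)

/-- With μ = 5, in every psychological Nash equilibrium of the pedestrian crossing
game the pedestrian crosses with probability 0. -/
theorem pedestrian_mu5_never_crosses (x y : ℝ) (h : pedPE 5 x y) : 1 - y = 0 := by
  obtain ⟨⟨hx0, hx1⟩, ⟨hy0, hy1⟩, hv, hp⟩ := h
  by_contra hne
  have hy : y < 1 := lt_of_le_of_ne hy1 (fun h' => hne (by linarith))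
  have h1 := hp 1 (by constructor <;> norm_num)
  have h0 := hv 0 (by constructor <;> norm_num)
  simp only [Ep, Ev] at h1 h0
  -- from h1: (1-y)*(W - C) ≤ 0 with 1-y>0 gives 4x ≥ 2 + 5(1-y)
  have hW : 2 - 2*x ≤ 2*x - 5*(1-y) := by nlinarith [mul_pos (sub_pos.mpr hy) (sub_pos.mpr hy)]
  -- from h0: x*(2 - 4y) ≥ 0
  have hxp : 1/2 < x := by linarith
  nlinarith [mul_pos (show (0:ℝ) < x by linarith) (show (0:ℝ) < 4*y - 2 by linarith)]
end

section
/- In the pedestrian crossing psychological game with μ = 2, the mixed profile where the vehicle reduces with probability 3/4 (maintains with probability 1/4) and the pedestrian crosses with probability 1/2 (waits with probability 1/2) is a psychological Nash equilibrium. -/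
/-- With μ = 2, the mixed profile where the vehicle reduces with probability 3/4 and
the pedestrian waits with probability 1/2 (crosses with probability 1/2) is a
psychological Nash equilibrium of the pedestrian crossing game. -/
theorem pedestrian_mu2_mixed_PE : pedPE 2 (3/4) (1/2) := by
  refine ⟨⟨by norm_num, by norm_num⟩, ⟨by norm_num, by norm_num⟩, ?_, ?_⟩
  · intro x' _; unfold Ev; ring_nf; norm_num
  · intro y' _; unfold Ep; ring_nf; norm_num
end

section
/- In the combined cyclist–vehicle bimatrix game with p > 14/17, the unique Nash equilibrium is (cycle, stop), with utilities (20, 8p + 7). -/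
/-- Cyclist utility matrix of the combined cyclist–vehicle game; rows: yield, walk,
cycle; columns: go, stop. -/
noncomputable def Mcyc (p : ℝ) : Fin 3 → Fin 2 → ℝ :=
  ![![-3*p + 8, -3*p + 6], ![-400, 15], ![-500, 20]]

/-- Vehicle utility matrix of the combined cyclist–vehicle game. -/
noncomputable def Mveh (p : ℝ) : Fin 3 → Fin 2 → ℝ :=
  ![![-8*p + 15, 9*p + 1], ![-100*p - 400, 14*p + 7], ![-100*p - 200, 8*p + 7]]

/-- A mixed strategy over `n` actions. -/
def IsStrat {n : ℕ} (σ : Fin n → ℝ) : Prop := (∀ i, 0 ≤ σ i) ∧ ∑ i, σ i = 1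

/-- Expected utility of a bimatrix entry under mixed strategies. -/
noncomputable def EE {m n : ℕ} (M : Fin m → Fin n → ℝ)
    (σ : Fin m → ℝ) (τ : Fin n → ℝ) : ℝ :=
  ∑ i, ∑ j, σ i * τ j * M i j

/-- Nash equilibrium of the combined cyclist–vehicle bimatrix game. -/
def IsNE (p : ℝ) (σc : Fin 3 → ℝ) (σv : Fin 2 → ℝ) : Prop :=
  IsStrat σc ∧ IsStrat σv ∧
  (∀ τ, IsStrat τ → EE (Mcyc p) τ σv ≤ EE (Mcyc p) σc σv) ∧
  (∀ τ, IsStrat τ → EE (Mveh p) σc τ ≤ EE (Mveh p) σc σv)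

/-- For p > 14/17, the unique Nash equilibrium of the combined cyclist–vehicle game
is (cycle, stop), with utilities (20, 8p+7). -/
theorem cyclist_vehicle_unique_NE (p : ℝ) (h1 : 14/17 < p) (h2 : p ≤ 1) :
    (∀ (σc : Fin 3 → ℝ) (σv : Fin 2 → ℝ),
      IsNE p σc σv ↔ (σc = ![0, 0, 1] ∧ σv = ![0, 1])) ∧
    EE (Mcyc p) ![0, 0, 1] ![0, 1] = 20 ∧
    EE (Mveh p) ![0, 0, 1] ![0, 1] = 8 * p + 7 := by
  have hstratC : IsStrat (![0, 0, 1] : Fin 3 → ℝ) := by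
    constructor
    · intro i; fin_cases i <;> norm_num
    · simp [Fin.sum_univ_three]
  have hstratV : IsStrat (![0, 1] : Fin 2 → ℝ) := by
    constructor
    · intro i; fin_cases i <;> norm_num
    · simp [Fin.sum_univ_two]
  refine ⟨fun σc σv => ⟨fun h => ?_, fun h => ?_⟩, ?_, ?_⟩
  · obtain ⟨⟨hcnn, hcs⟩, ⟨hvnn, hvs⟩, hcbest, hvbest⟩ := h
    have ha := hcnn 0; have hb := hcnn 1; have hc := hcnn 2
    have hq := hvnn 0; have hr := hvnn 1
    have hcs' : σc 0 + σc 1 + σc 2 = 1 := by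
      have := hcs; rwa [Fin.sum_univ_three] at this
    have hvs' : σv 0 + σv 1 = 1 := by
      have := hvs; rwa [Fin.sum_univ_two] at this
    have hvb := hvbest ![0, 1] hstratV
    simp [EE, Mveh, Fin.sum_univ_three, Fin.sum_univ_two] at hvb
    have h17 : 0 < 17 * p - 14 := by linarith
    have hSGpos : 0 < σc 0 * (17*p - 14) + σc 1 * (114*p + 407) + σc 2 * (108*p + 207) := by
      nlinarith [mul_nonneg ha h17.le, mul_nonneg hb (show (0:ℝ) ≤ 97*p + 421 by linarith),
        mul_nonneg hc (show (0:ℝ) ≤ 91*p + 221 by linarith)]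
    have hr' : σv 1 = 1 - σv 0 := by linarith
    rw [hr'] at hvb
    have hq0 : σv 0 = 0 := by
      by_contra hne
      have hqpos : 0 < σv 0 := lt_of_le_of_ne hq (Ne.symm hne)
      nlinarith [mul_pos hqpos hSGpos]
    have hr1 : σv 1 = 1 := by linarith
    have hcb := hcbest ![0, 0, 1] hstratC
    simp [EE, Mcyc, Fin.sum_univ_three, Fin.sum_univ_two, hq0, hr1] at hcb
    have ha0 : σc 0 = 0 := by
      nlinarith [mul_nonneg ha (show (0:ℝ) ≤ p by linarith)]
    have hb0 : σc 1 = 0 := by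
      nlinarith [mul_nonneg ha (show (0:ℝ) ≤ p by linarith)]
    have hc1 : σc 2 = 1 := by linarith
    constructor
    · funext i; fin_cases i <;> simp [ha0, hb0, hc1]
    · funext j; fin_cases j <;> simp [hq0, hr1]
  · obtain ⟨hσc, hσv⟩ := h
    subst hσc; subst hσv
    refine ⟨hstratC, hstratV, ?_, ?_⟩
    · intro τ ⟨hnn, hs⟩
      have h0 := hnn 0; have h1' := hnn 1; have h2' := hnn 2
      have hs' : τ 0 + τ 1 + τ 2 = 1 := by rwa [Fin.sum_univ_three] at hs
      simp [EE, Mcyc, Fin.sum_univ_three, Fin.sum_univ_two]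
      nlinarith
    · intro τ ⟨hnn, hs⟩
      have h0 := hnn 0; have h1' := hnn 1
      have hs' : τ 0 + τ 1 = 1 := by rwa [Fin.sum_univ_two] at hs
      simp [EE, Mveh, Fin.sum_univ_three, Fin.sum_univ_two]
      nlinarith
  · simp [EE, Mcyc, Fin.sum_univ_three, Fin.sum_univ_two]
  · simp [EE, Mveh, Fin.sum_univ_three, Fin.sum_univ_two]
end
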